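/- Let R be a region and Z a zone, with canonical distance graphs having edge weights R_{xy} and Z_{xy} respectively. Then the intersection R ∩ Z is empty if and only if there exist vertices x, y (in X∪{x₀}) such that Z_{yx} + R_{xy} ≤ (<,0). -/

import Mathlib

attribute [local instance] Classical.propDecidable

noncomputable section

namespace TAform

/-! ### Weights `(≼, c)` with `c ∈ ℤ ∪ {∞}` -/

/-- Values in `ℤ ∪ {∞}`: `none` represents `∞`. -/
abbrev OVal := Option ℤ

/-- Addition on `ℤ ∪ {∞}`. -/
def ovAdd : OVal → OVal → OVal
  | some a, some b => some (a + b)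
  | _, _ => none

/-- Strict order on `ℤ ∪ {∞}`. -/
def ovLt : OVal → OVal → Prop
  | some a, some b => a < b
  | some _, none => True
  | none, _ => False

/-- A weight `(≼, c)`: `strict = true` means `≼` is `<`, `strict = false` means `≤`;
`val ∈ ℤ ∪ {∞}`. -/
structure Weight where
  strict : Bool
  val : OVal

/-- The weight `(<, ∞)`. -/
def winf : Weight := ⟨true, none⟩

/-- The weight `(≤, c)`. -/
def wle (c : ℤ) : Weight := ⟨false, some c⟩

/-- The weight `(<, c)`. -/
def wlt (c : ℤ) : Weight := ⟨true, some c⟩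

/-- Addition: `(≼₁,c₁)+(≼₂,c₂) = (≼,c₁+c₂)` where `≼` is `<` iff `≼₁` or `≼₂` is `<`. -/
def Weight.add (a b : Weight) : Weight := ⟨a.strict || b.strict, ovAdd a.val b.val⟩

/-- Order: `(≼₁,c₁) < (≼₂,c₂)` iff `c₁ < c₂`, or `c₁ = c₂`, `≼₁` is `<` and `≼₂` is `≤`. -/
def Weight.lt (a b : Weight) : Prop :=
  ovLt a.val b.val ∨ (a.val = b.val ∧ a.strict = true ∧ b.strict = false)

def Weight.le (a b : Weight) : Prop := Weight.lt a b ∨ a = b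

/-- Minus: `−(≼,c) = (≼,−c)`. -/
def Weight.neg (w : Weight) : Weight := ⟨w.strict, Option.map (fun c => -c) w.val⟩

/-- Floor: `⌊(<,c)⌋ = (≤,c−1)` and `⌊(≤,c)⌋ = (≤,c)`. -/
def Weight.floor (w : Weight) : Weight :=
  ⟨false, if w.strict then Option.map (fun c => c - 1) w.val else w.val⟩

/-- Ceiling (on integer-valued weights): `⌈(≤,c)⌉ = (≤,c)` and `⌈(<,c)⌉ = (<,c+1)`. -/
def Weight.ceil (w : Weight) : Weight :=
  if w.strict then ⟨true, Option.map (fun c => c + 1) w.val⟩ else w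

/-- Maximum of two weights. -/
def Weight.max (a b : Weight) : Weight := if Weight.lt a b then b else a

/-- Satisfaction: `d ≼ c` for a real number `d` and a weight `(≼,c)`. -/
def Weight.sat (w : Weight) (d : ℝ) : Prop :=
  match w.val with
  | none => True
  | some c => if w.strict then d < (c : ℝ) else d ≤ (c : ℝ)

/-! ### Distance graphs and their semantics -/

/-- Vertices: clocks of `X` together with the special vertex `x₀` (represented by `none`). -/
abbrev Vtx (X : Type*) := Option X

/-- A distance graph: a weight for every ordered pair of vertices.  The edge
`a →^{≼ c} b` represents the constraint `v b − v a ≼ c`. -/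
abbrev DGraph (X : Type*) := Vtx X → Vtx X → Weight

/-- A clock valuation. -/
abbrev Val (X : Type*) := X → ℝ

/-- The valuation is nonnegative (clock valuations map into `ℝ≥0`). -/
def Nonneg {X : Type*} (v : Val X) : Prop := ∀ x, 0 ≤ v x

/-- Extension of a valuation to all vertices, sending `x₀` to `0`. -/
def extV {X : Type*} (v : Val X) : Vtx X → ℝ
  | none => 0
  | some x => v x

/-- Semantics of a distance graph: the set of nonnegative clock valuations
(with `x₀ = 0`) satisfying all edge constraints. -/
def sem {X : Type*} (G : DGraph X) : Set (Val X) :=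
  { v | Nonneg v ∧ ∀ a b, (G a b).sat (extV v b - extV v a) }

/-- Weight of the path `a :: l ++ [b]` in `G` (sum of the weights of its edges). -/
def pathWeight {X : Type*} (G : DGraph X) : Vtx X → List (Vtx X) → Vtx X → Weight
  | a, [], b => G a b
  | a, c :: l, b => (G a c).add (pathWeight G c l b)

/-- `G` has only positive cycles: no cycle has weight at most `(<,0)`. -/
def OnlyPositiveCycles {X : Type*} (G : DGraph X) : Prop :=
  ∀ (a : Vtx X) (l : List (Vtx X)), ¬ (pathWeight G a l a).le (wlt 0)

/-- Canonical form: the weight of the edge from `a` to `b` is a lower bound of the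
weights of all paths from `a` to `b`. -/
def PathCanonical {X : Type*} (G : DGraph X) : Prop :=
  ∀ (a b : Vtx X) (l : List (Vtx X)), (G a b).le (pathWeight G a l b)

/-- The weight `w` bounds the difference `v b − v a` over all `v ∈ S`. -/
def Bounds {X : Type*} (S : Set (Val X)) (a b : Vtx X) (w : Weight) : Prop :=
  ∀ v ∈ S, w.sat (extV v b - extV v a)

/-- `G` is the canonical distance graph of the set `S`: it represents `S` and each of
its edge weights is the least weight bounding the corresponding difference over `S`
(equivalently, for sets defined by clock constraints, the lower bound of the weights
of paths between its endpoints). -/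
def IsCanonGraph {X : Type*} (G : DGraph X) (S : Set (Val X)) : Prop :=
  sem G = S ∧ ∀ a b w, Bounds S a b w → (G a b).le w

/-- A zone: a set of valuations defined by a conjunction of constraints of the form
`x − y # c` or `x # c`, i.e. the set represented by some distance graph. -/
def IsZone {X : Type*} (Z : Set (Val X)) : Prop := ∃ G : DGraph X, sem G = Z

/-! ### Regions and closure -/

/-- Region equivalence with respect to the bound function `α`: same integer parts
(or both above the bound), same set of clocks with zero fractional part, and the
same ordering of fractional parts of bounded clocks. -/
def regEq {X : Type*} (α : X → ℕ) (v w : Val X) : Prop :=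
  (∀ x, ((α x : ℝ) < v x ∧ (α x : ℝ) < w x) ∨
    (⌊v x⌋ = ⌊w x⌋ ∧ (Int.fract (v x) = 0 ↔ Int.fract (w x) = 0))) ∧
  (∀ x y, v x ≤ (α x : ℝ) → v y ≤ (α y : ℝ) →
    (Int.fract (v x) ≤ Int.fract (v y) ↔ Int.fract (w x) ≤ Int.fract (w y)))

/-- A region with respect to `α`: an equivalence class of region equivalence
(inside the nonnegative valuations). -/
def IsRegion {X : Type*} (α : X → ℕ) (R : Set (Val X)) : Prop :=
  ∃ v : Val X, Nonneg v ∧ R = { w | Nonneg w ∧ regEq α v w }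

/-- Closure abstraction: the union of the regions (w.r.t. `α`) intersecting `S`. -/
def Closure {X : Type*} (α : X → ℕ) (S : Set (Val X)) : Set (Val X) :=
  ⋃₀ { R | IsRegion α R ∧ (R ∩ S).Nonempty }

/-! ### LU-bounds and the `Extra⁺_LU` extrapolation -/

/-- `w > (≤, l)` where `l ∈ ℕ ∪ {−∞}` (`⊥` is `−∞`). -/
def gtLB (w : Weight) (l : WithBot ℕ) : Prop :=
  ∀ n : ℕ, l = (n : WithBot ℕ) → ovLt (some (n : ℤ)) w.val

/-- `−w > (≤, l)` where `l ∈ ℕ ∪ {−∞}`. -/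
def negGtLB (w : Weight) (l : WithBot ℕ) : Prop :=
  ∃ c : ℤ, w.val = some c ∧ ∀ n : ℕ, l = (n : WithBot ℕ) → c < -(n : ℤ)

/-- The weight `(<, −u)` for `u ∈ ℕ ∪ {−∞}` (with `(<,∞)` when `u = −∞`). -/
def wltNeg (u : WithBot ℕ) : Weight :=
  ⟨true, WithBot.recBotCoe none (fun n => some (-(n : ℤ))) u⟩

/-- The `Extra⁺_{LU}` extrapolation, applied edgewise to a distance graph `G`
(the canonical graph of a zone): `Z⁺_{xy} = (<,∞)` if `Z_{xy} > (≤,L_y)`, or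
`−Z_{y0} > (≤,L_y)`, or `−Z_{x0} > (≤,U_x)` and `y ≠ x₀`;
`Z⁺_{x0} = (<,−U_x)` if `−Z_{x0} > (≤,U_x)`; and `Z⁺_{xy} = Z_{xy}` otherwise. -/
def extraLU {X : Type*} (L U : X → WithBot ℕ) (G : DGraph X) : DGraph X := fun a b =>
  match a, b with
  | some x, some y =>
      if gtLB (G (some x) (some y)) (L y) ∨ negGtLB (G (some y) none) (L y) ∨
          negGtLB (G (some x) none) (U x)
      then winf else G (some x) (some y)
  | none, some y =>
      if gtLB (G none (some y)) (L y) ∨ negGtLB (G (some y) none) (L y)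
      then winf else G none (some y)
  | some x, none =>
      if negGtLB (G (some x) none) (U x) then wltNeg (U x) else G (some x) none
  | none, none => G none none

/-! ### LU-preorder and its abstraction -/

/-- `l < r` where `l ∈ ℕ ∪ {−∞}` and `r : ℝ`. -/
def lbLtR (l : WithBot ℕ) (r : ℝ) : Prop := ∀ n : ℕ, l = (n : WithBot ℕ) → (n : ℝ) < r

/-- The LU-preorder `ν' ≼_{LU} ν`: for each clock `x`, either `ν' x = ν x`,
or `L x < ν' x < ν x`, or `U x < ν x < ν' x`. -/
def LUpre {X : Type*} (L U : X → WithBot ℕ) (ν' ν : Val X) : Prop :=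
  ∀ x, ν' x = ν x ∨ (lbLtR (L x) (ν' x) ∧ ν' x < ν x) ∨ (lbLtR (U x) (ν x) ∧ ν x < ν' x)

/-- The abstraction `a_{≼LU}(W) = { ν | ∃ ν' ∈ W, ν' ≼_{LU} ν }` (inside the
nonnegative valuations). -/
def aLU {X : Type*} (L U : X → WithBot ℕ) (W : Set (Val X)) : Set (Val X) :=
  { ν | Nonneg ν ∧ ∃ ν' ∈ W, LUpre L U ν' ν }

/-! ### Guards, transitions, timed automata -/

/-- Comparison operators `# ∈ {<, ≤, =, ≥, >}`. -/
inductive Cmp | lt | le | eq | ge | gt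
deriving DecidableEq

/-- Satisfaction of a comparison by real numbers. -/
def Cmp.sat : Cmp → ℝ → ℝ → Prop
  | .lt, a, b => a < b
  | .le, a, b => a ≤ b
  | .eq, a, b => a = b
  | .ge, a, b => a ≥ b
  | .gt, a, b => a > b

/-- A clock constraint (guard): a conjunction (list) of constraints `x # c`, `c ∈ ℕ`. -/
abbrev Guard (X : Type*) := List (X × Cmp × ℕ)

/-- `v ⊨ g`: every conjunct of the guard holds. -/
def gsat {X : Type*} (v : Val X) (g : Guard X) : Prop :=
  ∀ p ∈ g, Cmp.sat p.2.1 (v p.1) (p.2.2 : ℝ)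

/-- `[R]v`: reset the clocks in `R` to `0`, leaving the others unchanged. -/
def resetVal {X : Type*} (R : Set X) (v : Val X) : Val X := Set.indicator Rᶜ v

/-- One step `ν →^{δ,t} ν'` for a transition with guard `g` and reset set `R`:
`ν + δ ⊨ g` and `ν' = [R](ν + δ)`. -/
def step {X : Type*} (g : Guard X) (R : Set X) (δ : ℝ) (ν ν' : Val X) : Prop :=
  0 ≤ δ ∧ gsat (fun x => ν x + δ) g ∧ ν' = resetVal R (fun x => ν x + δ)

/-- `Post(S,t)`: all valuations reachable by the transition from valuations in `S`. -/
def Post {X : Type*} (g : Guard X) (R : Set X) (S : Set (Val X)) : Set (Val X) :=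
  { ν' | ∃ ν ∈ S, ∃ δ : ℝ, step g R δ ν ν' }

/-- A timed automaton `(Q, q₀, X, T, Acc)`. -/
structure TimedAuto (Q X : Type*) where
  init : Q
  trans : Set (Q × Guard X × Set X × Q)
  acc : Set Q

/-- `(q,ν) →^{δ,t} (q',ν')` for a transition `t = (q,g,R,q')` of the automaton. -/
def TimedAuto.cstep {Q X : Type*} (A : TimedAuto Q X) (t : Q × Guard X × Set X × Q)
    (δ : ℝ) (c c' : Q × Val X) : Prop :=
  t ∈ A.trans ∧ c.1 = t.1 ∧ c'.1 = t.2.2.2 ∧ step t.2.1 t.2.2.1 δ c.2 c'.2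

/-! The region of `v₀` contains the zone in which every clock `x ≤ α x` takes exactly the
value `v₀ x` and every other clock exceeds `α x`; these are unary constraints, i.e. paths
through `x₀`. Tightening the canonical graph of `Z` by them gives a closed system as soon
as no cycle `q → p → x₀ → q` made of one edge of `Z` and two unary constraints is negative,
and a closed system with non-negative diagonal is satisfied by some valuation, built one
clock at a time. Such a cycle involves real numbers, but `Z` is integral: it is compared
with an integer bound on `q - p` valid on the whole region (regions preserve the floor and
ceiling of differences of bounded clocks), hence with `R_{pq}`, so it is non-negative
whenever `Z_{qp} + R_{pq}` is. -/

/-- A bound on a real number: `⟨c, true⟩` is `≤ c` and `⟨c, false⟩` is `< c`, ordered by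
tightness and added like weights. -/
@[ext]
structure DiffBound where
  val : ℝ
  nonstrict : Bool

namespace DiffBound

instance : LinearOrder DiffBound :=
  LinearOrder.lift' (fun b => toLex (b.val, b.nonstrict)) fun b b' h => by
    simpa [DiffBound.ext_iff] using h

theorem le_iff {b b' : DiffBound} :
    b ≤ b' ↔ b.val < b'.val ∨ b.val = b'.val ∧ b.nonstrict ≤ b'.nonstrict :=
  Prod.Lex.le_iff

instance : Add DiffBound := ⟨fun b b' => ⟨b.val + b'.val, b.nonstrict && b'.nonstrict⟩⟩
instance : Zero DiffBound := ⟨⟨0, true⟩⟩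

@[simp] theorem val_add (b b' : DiffBound) : (b + b').val = b.val + b'.val := rfl
@[simp] theorem nonstrict_add (b b' : DiffBound) :
    (b + b').nonstrict = (b.nonstrict && b'.nonstrict) := rfl
@[simp] theorem val_zero : (0 : DiffBound).val = 0 := rfl
@[simp] theorem nonstrict_zero : (0 : DiffBound).nonstrict = true := rfl

instance : AddCommMonoid DiffBound where
  add_assoc _ _ _ := by ext <;> simp [add_assoc, Bool.and_assoc]
  zero_add _ := by ext <;> simp
  add_zero _ := by ext <;> simp
  add_comm _ _ := by ext <;> simp [add_comm, Bool.and_comm]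
  nsmul := nsmulRec

instance : IsOrderedAddMonoid DiffBound where
  add_le_add_left b b' h c := by
    rw [le_iff] at h ⊢
    rcases h with h | ⟨h, h'⟩
    · exact Or.inl (by simpa using h)
    · refine Or.inr ⟨by simp [h], ?_⟩
      obtain ⟨_, _ | _⟩ := c <;> simp [h']

def atMost (c : ℝ) : DiffBound := ⟨c, true⟩

def below (c : ℝ) : DiffBound := ⟨c, false⟩

theorem eq_atMost_or_eq_below (b : DiffBound) : b = atMost b.val ∨ b = below b.val := by
  obtain ⟨c, _ | _⟩ := b <;> simp [atMost, below]

theorem atMost_zero : atMost 0 = 0 := rfl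

@[simp] theorem atMost_add_atMost (c d : ℝ) : atMost c + atMost d = atMost (c + d) := rfl

@[simp] theorem atMost_add_below (c d : ℝ) : atMost c + below d = below (c + d) := rfl

@[simp] theorem below_add_atMost (c d : ℝ) : below c + atMost d = below (c + d) := rfl

@[simp] theorem below_add_below (c d : ℝ) : below c + below d = below (c + d) := rfl

@[simp] theorem atMost_le_atMost {c d : ℝ} : atMost d ≤ atMost c ↔ d ≤ c := by
  rw [le_iff]
  simp [atMost, le_iff_lt_or_eq]

@[simp] theorem atMost_le_below {c d : ℝ} : atMost d ≤ below c ↔ d < c := by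
  simp [le_iff, atMost, below]

@[simp] theorem below_le_atMost {c d : ℝ} : below d ≤ atMost c ↔ d ≤ c := by
  rw [le_iff]
  simp [below, atMost, le_iff_lt_or_eq]

@[simp] theorem below_le_below {c d : ℝ} : below d ≤ below c ↔ d ≤ c := by
  rw [le_iff]
  simp [below, le_iff_lt_or_eq]

theorem atMost_le_of_lt {d : ℝ} {b : DiffBound} (h : d < b.val) : atMost d ≤ b :=
  le_iff.2 (Or.inl h)

theorem exists_atMost_le_of_atMost_le_add {d : ℝ} {w₁ w₂ : WithTop DiffBound}
    (h : (atMost d : WithTop DiffBound) ≤ w₁ + w₂) :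
    ∃ t, (atMost t : WithTop DiffBound) ≤ w₁ ∧ (atMost (d - t) : WithTop DiffBound) ≤ w₂ := by
  induction w₁ with
  | top =>
    induction w₂ with
    | top => exact ⟨0, le_top, le_top⟩
    | coe b₂ =>
      refine ⟨d - (b₂.val - 1), le_top, WithTop.coe_le_coe.2 (atMost_le_of_lt ?_)⟩
      linarith
  | coe b₁ =>
    induction w₂ with
    | top => exact ⟨b₁.val - 1, WithTop.coe_le_coe.2 (atMost_le_of_lt (by linarith)), le_top⟩
    | coe b₂ =>
      simp only [← WithTop.coe_add, WithTop.coe_le_coe] at h ⊢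
      rcases eq_atMost_or_eq_below b₁ with h₁ | h₁ <;>
        rcases eq_atMost_or_eq_below b₂ with h₂ | h₂ <;>
        rw [h₁, h₂] at h ⊢ <;> simp only [atMost_add_atMost, atMost_add_below,
          below_add_atMost, below_add_below, atMost_le_atMost, atMost_le_below] at h ⊢
      · exact ⟨b₁.val, le_rfl, by linarith⟩
      · exact ⟨b₁.val, le_rfl, by linarith⟩
      · exact ⟨d - b₂.val, by linarith, by linarith⟩
      · exact ⟨(d + b₁.val - b₂.val) / 2, by linarith, by linarith⟩

end DiffBound

open DiffBound

theorem exists_forall_mem_isUpperSet_isLowerSet {ι : Type*} (s : Finset ι) (U D : ι → Set ℝ)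
    (hU : ∀ i, IsUpperSet (U i)) (hD : ∀ i, IsLowerSet (D i))
    (h : ∀ i ∈ s, ∀ j ∈ s, (U i ∩ D j).Nonempty) : ∃ t, ∀ i ∈ s, t ∈ U i ∧ t ∈ D i := by
  rcases s.eq_empty_or_nonempty with rfl | hs
  · exact ⟨0, by simp⟩
  obtain ⟨i₀, hi₀, hmax⟩ := s.exists_max_image (fun i => (⟨U i, hU i⟩ : UpperSet ℝ)) hs
  obtain ⟨j₀, hj₀, hmin⟩ := s.exists_min_image (fun j => (⟨D j, hD j⟩ : LowerSet ℝ)) hs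
  obtain ⟨t, htU, htD⟩ := h i₀ hi₀ j₀ hj₀
  exact ⟨t, fun i hi => ⟨UpperSet.coe_subset_coe.2 (hmax i hi) htU,
    LowerSet.coe_subset_coe.2 (hmin i hi) htD⟩⟩

theorem exists_potential {V : Type*} [Fintype V] (B : V → V → WithTop DiffBound)
    (hB : ∀ a b c, B a c ≤ B a b + B b c) (hB₀ : ∀ a, 0 ≤ B a a) :
    ∃ f : V → ℝ, ∀ a b, (atMost (f b - f a) : WithTop DiffBound) ≤ B a b := by
  suffices ∀ s : Finset V, ∃ f : V → ℝ, ∀ a ∈ s, ∀ b ∈ s,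
      (atMost (f b - f a) : WithTop DiffBound) ≤ B a b by
    obtain ⟨f, hf⟩ := this Finset.univ
    exact ⟨f, fun a b => hf a (Finset.mem_univ a) b (Finset.mem_univ b)⟩
  intro s
  induction s using Finset.induction_on with
  | empty => exact ⟨0, by simp⟩
  | insert z s hz ih =>
    obtain ⟨f, hf⟩ := ih
    -- each old vertex restricts the value of `z` to an up-set and a down-set, which meet
    -- pairwise by closedness
    obtain ⟨t, ht⟩ := exists_forall_mem_isUpperSet_isLowerSet s
      (fun a => {t | (atMost (f a - t) : WithTop DiffBound) ≤ B z a})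
      (fun b => {t | (atMost (t - f b) : WithTop DiffBound) ≤ B b z})
      (fun a t t' htt' ht => le_trans (WithTop.coe_le_coe.2 (atMost_le_atMost.2 (by linarith))) ht)
      (fun b t t' htt' ht => le_trans (WithTop.coe_le_coe.2 (atMost_le_atMost.2 (by linarith))) ht)
      (fun a ha b hb => by
        obtain ⟨t', hbz, hza⟩ :=
          exists_atMost_le_of_atMost_le_add ((hf b hb a ha).trans (hB b z a))
        exact ⟨f b + t', by simpa [sub_sub] using hza, by simpa using hbz⟩)
    refine ⟨Function.update f z t, ?_⟩
    have hfz : ∀ a ∈ s, a ≠ z := fun a ha h => hz (h ▸ ha)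
    intro a ha b hb
    rcases Finset.mem_insert.1 ha with rfl | has <;> rcases Finset.mem_insert.1 hb with rfl | hbs
    · simpa [atMost_zero] using hB₀ _
    · simpa [hfz b hbs] using (ht b hbs).1
    · simpa [hfz a has] using (ht a has).2
    · simpa [hfz a has, hfz b hbs] using hf a has b hbs

section Tightening

variable {V : Type*} {Z : V → V → WithTop DiffBound} {L U : V → WithTop DiffBound}

theorem min_add_le_add_min
    (hZ : ∀ a b c, Z a c ≤ Z a b + Z b c) (hL : ∀ a c, L a ≤ Z a c + L c)
    (hU : ∀ c b, U b ≤ U c + Z c b) (hLU : ∀ c, 0 ≤ L c + U c) (a b c : V) :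
    min (Z a c) (L a + U c) ≤ min (Z a b) (L a + U b) + min (Z b c) (L b + U c) := by
  rcases min_choice (Z a b) (L a + U b) with h₁ | h₁ <;>
    rcases min_choice (Z b c) (L b + U c) with h₂ | h₂ <;> rw [h₁, h₂]
  · exact min_le_of_left_le (hZ a b c)
  · refine min_le_of_right_le ?_
    calc L a + U c ≤ Z a b + L b + U c := by gcongr; exact hL a b
      _ = Z a b + (L b + U c) := add_assoc _ _ _
  · refine min_le_of_right_le ?_
    calc L a + U c ≤ L a + (U b + Z b c) := by gcongr; exact hU b c
      _ = L a + U b + Z b c := (add_assoc _ _ _).symm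
  · refine min_le_of_right_le ?_
    calc L a + U c ≤ L a + (L b + U b) + U c := by gcongr; exact le_add_of_nonneg_right (hLU b)
      _ = L a + U b + (L b + U c) := by abel

/-- `L a + U b` bounds `b - a` through an external reference point. The closure of
`min Z (L + U)` is `min Z (L' + U')`, where `L'` and `U'` are `L` and `U` tightened along `Z`. -/
theorem exists_potential_of_zero_le_add_add [Fintype V]
    (hZ : ∀ a b c, Z a c ≤ Z a b + Z b c) (hZ₀ : ∀ a, Z a a = 0)
    (hLU : ∀ p q, 0 ≤ Z q p + L p + U q) :
    ∃ f : V → ℝ, ∀ a b, (atMost (f b - f a) : WithTop DiffBound) ≤ Z a b ∧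
      (atMost (f b - f a) : WithTop DiffBound) ≤ L a + U b := by
  set L' : V → WithTop DiffBound := fun a => Finset.univ.inf fun p => Z a p + L p
  set U' : V → WithTop DiffBound := fun b => Finset.univ.inf fun q => U q + Z q b
  have hL'_eq : ∀ c, ∃ p, L' c = Z c p + L p := fun c => by
    obtain ⟨p, -, hp⟩ := Finset.exists_mem_eq_inf _ ⟨c, Finset.mem_univ c⟩ fun p => Z c p + L p
    exact ⟨p, hp⟩
  have hU'_eq : ∀ c, ∃ q, U' c = U q + Z q c := fun c => by
    obtain ⟨q, -, hq⟩ := Finset.exists_mem_eq_inf _ ⟨c, Finset.mem_univ c⟩ fun q => U q + Z q c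
    exact ⟨q, hq⟩
  have hL' : ∀ a c, L' a ≤ Z a c + L' c := fun a c => by
    obtain ⟨p, hp⟩ := hL'_eq c
    calc L' a ≤ Z a p + L p := Finset.inf_le (Finset.mem_univ p)
      _ ≤ Z a c + Z c p + L p := by gcongr; exact hZ a c p
      _ = Z a c + L' c := by rw [hp, add_assoc]
  have hU' : ∀ c b, U' b ≤ U' c + Z c b := fun c b => by
    obtain ⟨q, hq⟩ := hU'_eq c
    calc U' b ≤ U q + Z q b := Finset.inf_le (Finset.mem_univ q)
      _ ≤ U q + (Z q c + Z c b) := by gcongr; exact hZ q c b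
      _ = U' c + Z c b := by rw [hq, add_assoc]
  have hLU' : ∀ c, 0 ≤ L' c + U' c := fun c => by
    obtain ⟨p, hp⟩ := hL'_eq c
    obtain ⟨q, hq⟩ := hU'_eq c
    calc 0 ≤ Z q p + L p + U q := hLU p q
      _ ≤ Z q c + Z c p + L p + U q := by gcongr; exact hZ q c p
      _ = L' c + U' c := by rw [hp, hq]; abel
  have hLU_le : ∀ a b, L' a + U' b ≤ L a + U b := fun a b => by
    gcongr
    · simpa [hZ₀] using Finset.inf_le (f := fun p => Z a p + L p) (Finset.mem_univ a)
    · simpa [hZ₀] using Finset.inf_le (f := fun q => U q + Z q b) (Finset.mem_univ b)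
  obtain ⟨f, hf⟩ := exists_potential (fun a b => min (Z a b) (L' a + U' b))
    (min_add_le_add_min hZ hL' hU' hLU') fun a => le_min (hZ₀ a).ge (hLU' a)
  exact ⟨f, fun a b => ⟨(hf a b).trans (min_le_left _ _),
    (hf a b).trans ((min_le_right _ _).trans (hLU_le a b))⟩⟩

end Tightening

namespace Weight

def toBound : Weight → WithTop DiffBound
  | ⟨_, none⟩ => ⊤
  | ⟨false, some c⟩ => (atMost c : DiffBound)
  | ⟨true, some c⟩ => (below c : DiffBound)

@[simp] theorem toBound_wle (c : ℤ) : (wle c).toBound = (atMost c : DiffBound) := rfl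

@[simp] theorem toBound_wlt (c : ℤ) : (wlt c).toBound = (below c : DiffBound) := rfl

theorem sat_iff {w : Weight} {d : ℝ} : w.sat d ↔ (atMost d : WithTop DiffBound) ≤ w.toBound := by
  obtain ⟨_ | _, _ | c⟩ := w <;> simp [sat, toBound]

theorem toBound_add (w w' : Weight) : (w.add w').toBound = w.toBound + w'.toBound := by
  obtain ⟨_ | _, _ | c⟩ := w <;> obtain ⟨_ | _, _ | c'⟩ := w' <;>
    simp [Weight.add, ovAdd, toBound, ← WithTop.coe_add]

theorem toBound_mono {w w' : Weight} (h : w.le w') : w.toBound ≤ w'.toBound := by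
  rcases h with (h | ⟨h, hs, hs'⟩) | rfl
  · obtain ⟨_ | _, _ | c⟩ := w <;> obtain ⟨_ | _, _ | c'⟩ := w' <;>
      simp_all [ovLt, toBound, le_of_lt]
  · obtain ⟨s, _ | c⟩ := w <;> obtain ⟨s', _ | c'⟩ := w' <;>
      simp_all [toBound]
  · exact le_rfl

theorem le_wlt_zero_iff {w : Weight} : w.le (wlt 0) ↔ w.toBound < 0 := by
  rw [← not_le, ← WithTop.coe_zero, ← DiffBound.atMost_zero]
  obtain ⟨_ | _, _ | c⟩ := w <;> simp [Weight.le, Weight.lt, ovLt, wlt, toBound]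
  omega

/-- Integrality: `0 < c + k` in `ℤ` forces `1 ≤ c + k`. -/
theorem zero_le_toBound_add_below {w : Weight} {k : ℤ} {r : ℝ}
    (h : 0 ≤ w.toBound + (below k : DiffBound)) (hr : k - 1 < r) :
    0 ≤ w.toBound + (below r : DiffBound) := by
  rw [← WithTop.coe_zero, ← DiffBound.atMost_zero] at h ⊢
  obtain ⟨_ | _, _ | c⟩ := w <;> simp [toBound, ← WithTop.coe_add] at h ⊢
  all_goals
    have : (1 : ℝ) ≤ c + k := by exact_mod_cast (show (0 : ℤ) < c + k by exact_mod_cast h)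
    linarith

end Weight

namespace IsCanonGraph

variable {X : Type*} {G : DGraph X} {S : Set (Val X)}

theorem atMost_le (hG : IsCanonGraph G S) {v : Val X} (hv : v ∈ S) (a b : Vtx X) :
    (atMost (extV v b - extV v a) : WithTop DiffBound) ≤ (G a b).toBound :=
  Weight.sat_iff.1 ((hG.1 ▸ hv).2 a b)

/-- No weight bounds the empty set minimally. -/
theorem nonempty (hG : IsCanonGraph G S) : S.Nonempty := by
  by_contra hS
  have hbounds : ∀ w, Bounds S none none w := fun w v hv => absurd ⟨v, hv⟩ hS
  rcases hw : G none none with ⟨s, _ | c⟩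
  · have := Weight.toBound_mono (hG.2 none none (wlt 0) (hbounds _))
    rw [hw, Weight.toBound_wlt] at this
    simp [Weight.toBound] at this
  · have := Weight.toBound_mono (hG.2 none none (wlt (c - 1)) (hbounds _))
    rw [hw, Weight.toBound_wlt] at this
    cases s <;> simp [Weight.toBound] at this <;> linarith

theorem toBound_le_add (hG : IsCanonGraph G S) (a b c : Vtx X) :
    (G a c).toBound ≤ (G a b).toBound + (G b c).toBound := by
  rw [← Weight.toBound_add]
  refine Weight.toBound_mono (hG.2 a c _ fun v hv => ?_)
  rw [Weight.sat_iff, Weight.toBound_add]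
  have := add_le_add (hG.atMost_le hv a b) (hG.atMost_le hv b c)
  rwa [← WithTop.coe_add, atMost_add_atMost, sub_add_sub_cancel'] at this

theorem toBound_self (hG : IsCanonGraph G S) (a : Vtx X) : (G a a).toBound = 0 := by
  refine le_antisymm ?_ ?_
  · simpa [atMost_zero] using Weight.toBound_mono (hG.2 a a (wle 0) fun v _ => by
      simp [Weight.sat, wle])
  · obtain ⟨v, hv⟩ := hG.nonempty
    simpa [atMost_zero] using hG.atMost_le hv a a

end IsCanonGraph

theorem floor_sub_eq (a b : ℝ) :
    ⌊b - a⌋ = ⌊b⌋ - ⌊a⌋ - if Int.fract a ≤ Int.fract b then 0 else 1 := by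
  have ha := Int.floor_add_fract a
  have hb := Int.floor_add_fract b
  have := Int.fract_nonneg a
  have := Int.fract_nonneg b
  have := Int.fract_lt_one a
  have := Int.fract_lt_one b
  rw [Int.floor_eq_iff]
  split_ifs <;> push_cast <;> constructor <;> linarith

theorem floor_sub_eq_and_ceil_sub_eq {a b a' b' : ℝ} (ha : ⌊a⌋ = ⌊a'⌋) (hb : ⌊b⌋ = ⌊b'⌋)
    (hab : Int.fract a ≤ Int.fract b ↔ Int.fract a' ≤ Int.fract b')
    (hba : Int.fract b ≤ Int.fract a ↔ Int.fract b' ≤ Int.fract a') :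
    ⌊b - a⌋ = ⌊b' - a'⌋ ∧ ⌈b - a⌉ = ⌈b' - a'⌉ := by
  have hceil : ∀ c d : ℝ, ⌈d - c⌉ = -⌊c - d⌋ := fun c d => by
    rw [← neg_sub, Int.ceil_neg]
  refine ⟨?_, ?_⟩
  · rw [floor_sub_eq, floor_sub_eq, ha, hb, if_congr hab rfl rfl]
  · rw [hceil, hceil, floor_sub_eq, floor_sub_eq, ha, hb, if_congr hba rfl rfl]

theorem fract_le_zero_iff {a : ℝ} : Int.fract a ≤ 0 ↔ Int.fract a = 0 :=
  (Int.fract_nonneg a).ge_iff_eq'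

section Region

variable {X : Type*} {α : X → ℕ} {v₀ u : Val X}

def region (α : X → ℕ) (v₀ : Val X) : Set (Val X) := { w | Nonneg w ∧ regEq α v₀ w }

def Bounded (α : X → ℕ) (v₀ : Val X) : Vtx X → Prop
  | none => True
  | some x => v₀ x ≤ α x

theorem floor_eq_and_fract_eq_zero_iff (hu : u ∈ region α v₀) {x : X} (hx : v₀ x ≤ α x) :
    ⌊v₀ x⌋ = ⌊u x⌋ ∧ (Int.fract (v₀ x) = 0 ↔ Int.fract (u x) = 0) :=
  (hu.2.1 x).resolve_left fun h => hx.not_gt h.1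

theorem floor_extV_eq (hu : u ∈ region α v₀) {a : Vtx X} (ha : Bounded α v₀ a) :
    ⌊extV u a⌋ = ⌊extV v₀ a⌋ := by
  cases a with
  | none => rfl
  | some x => exact (floor_eq_and_fract_eq_zero_iff hu ha).1.symm

theorem fract_extV_le_iff (hu : u ∈ region α v₀) {a b : Vtx X} (ha : Bounded α v₀ a)
    (hb : Bounded α v₀ b) :
    Int.fract (extV u a) ≤ Int.fract (extV u b) ↔
      Int.fract (extV v₀ a) ≤ Int.fract (extV v₀ b) := by
  cases a with
  | none => simp [extV, Int.fract_nonneg]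
  | some x =>
    cases b with
    | none =>
      simp only [extV, Int.fract_zero, fract_le_zero_iff]
      exact (floor_eq_and_fract_eq_zero_iff hu ha).2.symm
    | some y => exact (hu.2.2 x y ha hb).symm

theorem floor_ceil_extV_sub (hu : u ∈ region α v₀) {a b : Vtx X} (ha : Bounded α v₀ a)
    (hb : Bounded α v₀ b) :
    ⌊extV u b - extV u a⌋ = ⌊extV v₀ b - extV v₀ a⌋ ∧
      ⌈extV u b - extV u a⌉ = ⌈extV v₀ b - extV v₀ a⌉ :=
  floor_sub_eq_and_ceil_sub_eq (floor_extV_eq hu ha) (floor_extV_eq hu hb)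
    (fract_extV_le_iff hu ha hb) (fract_extV_le_iff hu hb ha)

theorem ceil_extV (hu : u ∈ region α v₀) {a : Vtx X} (ha : Bounded α v₀ a) :
    ⌈extV u a⌉ = ⌈extV v₀ a⌉ := by
  simpa [extV] using (floor_ceil_extV_sub hu (a := none) trivial ha).2

theorem lt_of_mem_region (hu : u ∈ region α v₀) {x : X} (hx : α x < v₀ x) : α x < u x := by
  rcases hu.2.1 x with h | ⟨hfl, hfr⟩
  · exact h.2
  · have hceil : ⌈v₀ x⌉ = ⌈u x⌉ := by
      simpa using (floor_sub_eq_and_ceil_sub_eq (a := 0) (a' := 0) rfl hfl (by simp)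
        (by simpa [fract_le_zero_iff] using hfr)).2
    rw [← Int.cast_natCast, ← Int.lt_ceil] at hx ⊢
    rwa [← hceil]

theorem mem_region (hv₀ : Nonneg v₀) (hbnd : ∀ x, v₀ x ≤ α x → u x = v₀ x)
    (hunb : ∀ x, α x < v₀ x → α x < u x) : u ∈ region α v₀ := by
  refine ⟨fun x => ?_, fun x => ?_, fun x y hx hy => ?_⟩
  · rcases le_or_gt (v₀ x) (α x) with h | h
    · rw [hbnd x h]
      exact hv₀ x
    · exact (Nat.cast_nonneg _).trans (hunb x h).le
  · rcases le_or_gt (v₀ x) (α x) with h | h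
    · exact Or.inr (by simp [hbnd x h])
    · exact Or.inl ⟨h, hunb x h⟩
  · rw [hbnd x hx, hbnd y hy]

end Region

def NonnegCyclesWith {X : Type*} (G : DGraph X) (S : Set (Val X)) : Prop :=
  ∀ p q (W : Weight), Bounds S p q W → 0 ≤ (G q p).toBound + W.toBound

section Separation

variable {X : Type*} {α : X → ℕ} {v₀ : Val X}

/-- `regionLower α v₀ a` bounds `x₀ - a` and `regionUpper α v₀ b` bounds `b - x₀`. -/
def regionLower (α : X → ℕ) (v₀ : Val X) : Vtx X → WithTop DiffBound
  | none => 0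
  | some x => if v₀ x ≤ α x then (atMost (-v₀ x) : DiffBound) else (below (-α x) : DiffBound)

def regionUpper (α : X → ℕ) (v₀ : Val X) : Vtx X → WithTop DiffBound
  | none => 0
  | some x => if v₀ x ≤ α x then (atMost (v₀ x) : DiffBound) else ⊤

theorem regionLower_add_regionUpper {p q : Vtx X} (hp : Bounded α v₀ p)
    (hq : Bounded α v₀ q) :
    regionLower α v₀ p + regionUpper α v₀ q = (atMost (extV v₀ q - extV v₀ p) : DiffBound) := by
  cases p <;> cases q <;>
    simp_all [regionLower, regionUpper, Bounded, extV, atMost_zero, ← WithTop.coe_add,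
      neg_add_eq_sub]

theorem regionLower_add_regionUpper_of_lt {x : X} {q : Vtx X} (hx : α x < v₀ x)
    (hq : Bounded α v₀ q) :
    regionLower α v₀ (some x) + regionUpper α v₀ q =
      (below (extV v₀ q - α x) : DiffBound) := by
  cases q <;>
    simp_all [regionLower, regionUpper, Bounded, extV, ← WithTop.coe_add, not_le.2 hx,
      neg_add_eq_sub]

variable {G : DGraph X}

/-- The integer weight `(≤, d)` or `(<, ⌈d⌉)` bounds `q - p` on the whole region. -/
theorem zero_le_toBound_add_atMost_of_bounded (hsep : NonnegCyclesWith G (region α v₀))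
    {p q : Vtx X} (hp : Bounded α v₀ p) (hq : Bounded α v₀ q) :
    0 ≤ (G q p).toBound + (atMost (extV v₀ q - extV v₀ p) : DiffBound) := by
  set d := extV v₀ q - extV v₀ p
  by_cases hd : (⌈d⌉ : ℝ) = d
  · have hW : Bounds (region α v₀) p q (wle ⌈d⌉) := fun u hu => by
      simp only [Weight.sat, wle, Bool.false_eq_true, ↓reduceIte]
      rw [← (floor_ceil_extV_sub hu hp hq).2]
      exact Int.le_ceil _
    simpa [hd] using hsep p q _ hW
  · have hW : Bounds (region α v₀) p q (wlt ⌈d⌉) := fun u hu => by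
      obtain ⟨hfloor, hceil⟩ := floor_ceil_extV_sub hu hp hq
      simp only [Weight.sat, wlt, ↓reduceIte]
      refine lt_of_le_of_ne (hceil ▸ Int.le_ceil _) fun h => hd ?_
      have : ⌊d⌋ = ⌈d⌉ := by rw [← hfloor, h, Int.floor_intCast]
      exact le_antisymm (by rw [← this]; exact Int.floor_le d) (Int.le_ceil d)
    refine (Weight.zero_le_toBound_add_below (r := d) (hsep p q _ hW)
      (by linarith [Int.ceil_lt_add_one d])).trans ?_
    gcongr
    exact WithTop.coe_le_coe.2 (below_le_atMost.2 le_rfl)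

/-- The integer weight `(<, ⌈v₀ q⌉ - α x)` bounds `q - x` on the whole region. -/
theorem zero_le_toBound_add_below_of_lt (hsep : NonnegCyclesWith G (region α v₀)) {x : X}
    {q : Vtx X} (hx : α x < v₀ x) (hq : Bounded α v₀ q) :
    0 ≤ (G q (some x)).toBound + (below (extV v₀ q - α x) : DiffBound) := by
  have hW : Bounds (region α v₀) (some x) q (wlt (⌈extV v₀ q⌉ - α x)) := fun u hu => by
    have h₁ := lt_of_mem_region hu hx
    have h₂ := (ceil_extV hu hq) ▸ Int.le_ceil (extV u q)
    simp only [Weight.sat, wlt, ↓reduceIte]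
    change extV u q - u x < _
    push_cast
    linarith
  exact Weight.zero_le_toBound_add_below (hsep _ q _ hW)
    (by push_cast; linarith [Int.ceil_lt_add_one (extV v₀ q)])

theorem zero_le_toBound_add_regionLower_add_regionUpper
    (hsep : NonnegCyclesWith G (region α v₀)) (p q : Vtx X) :
    0 ≤ (G q p).toBound + regionLower α v₀ p + regionUpper α v₀ q := by
  by_cases hq : Bounded α v₀ q
  swap
  · cases q with
    | none => exact absurd trivial hq
    | some y => simp [regionUpper, show ¬ v₀ y ≤ α y from hq]
  rw [add_assoc]
  by_cases hp : Bounded α v₀ p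
  · rw [regionLower_add_regionUpper hp hq]
    exact zero_le_toBound_add_atMost_of_bounded hsep hp hq
  · cases p with
    | none => exact absurd trivial hp
    | some x =>
      have hx : α x < v₀ x := not_le.1 hp
      rw [regionLower_add_regionUpper_of_lt hx hq]
      exact zero_le_toBound_add_below_of_lt hsep hx hq

end Separation

theorem region_inter_nonempty {X : Type*} [Fintype X] {α : X → ℕ} {v₀ : Val X}
    {Z : Set (Val X)} {GZ : DGraph X} (hv₀ : Nonneg v₀) (hGZ : IsCanonGraph GZ Z)
    (hsep : NonnegCyclesWith GZ (region α v₀)) :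
    (region α v₀ ∩ Z).Nonempty := by
  obtain ⟨f, hf⟩ := exists_potential_of_zero_le_add_add hGZ.toBound_le_add hGZ.toBound_self
    (zero_le_toBound_add_regionLower_add_regionUpper hsep)
  set u : Val X := fun x => f (some x) - f none
  have hu : ∀ a b, extV u b - extV u a = f b - f a := by
    rintro (_ | _) (_ | _) <;> simp [u, extV]
  have hbnd : ∀ x, v₀ x ≤ α x → u x = v₀ x := fun x hx => by
    have h₁ := (hf none (some x)).2
    have h₂ := (hf (some x) none).2
    simp [regionLower, regionUpper, hx] at h₁ h₂
    simp only [u]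
    linarith
  have hunb : ∀ x, α x < v₀ x → α x < u x := fun x hx => by
    have h := (hf (some x) none).2
    simp [regionLower, regionUpper, not_le.2 hx] at h
    simp only [u]
    linarith
  have huR := mem_region hv₀ hbnd hunb
  exact ⟨u, huR, hGZ.1 ▸ ⟨huR.1, fun a b => Weight.sat_iff.2 (hu a b ▸ (hf a b).1)⟩⟩

theorem stmt1_general {X : Type*} [Fintype X] (α : X → ℕ) (R Z : Set (Val X))
    (hR : IsRegion α R)
    (GR GZ : DGraph X) (hGR : IsCanonGraph GR R) (hGZ : IsCanonGraph GZ Z) :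
    R ∩ Z = ∅ ↔ ∃ x y : Vtx X, ((GZ y x).add (GR x y)).le (wlt 0) := by
  obtain ⟨v₀, hv₀, rfl⟩ := hR
  constructor
  · intro h
    by_contra! hpos
    refine (region_inter_nonempty hv₀ hGZ fun p q W hW => ?_).ne_empty h
    calc 0 ≤ (GZ q p).toBound + (GR p q).toBound := by
          simpa [Weight.le_wlt_zero_iff, Weight.toBound_add] using hpos p q
      _ ≤ (GZ q p).toBound + W.toBound := by gcongr; exact Weight.toBound_mono (hGR.2 p q W hW)
  · rintro ⟨x, y, hxy⟩
    refine Set.eq_empty_of_forall_notMem fun v ⟨hvR, hvZ⟩ => ?_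
    have := add_le_add (hGZ.atMost_le hvZ y x) (hGR.atMost_le hvR x y)
    rw [← Weight.toBound_add, ← WithTop.coe_add, atMost_add_atMost, sub_add_sub_cancel, sub_self,
      atMost_zero, WithTop.coe_zero] at this
    exact (Weight.le_wlt_zero_iff.1 hxy).not_ge this

/-- For a region `R` and a zone `Z` with canonical distance graphs
`GR`, `GZ`: `R ∩ Z = ∅` iff there are vertices `x, y` with `Z_{yx} + R_{xy} ≤ (<,0)`. -/
theorem stmt1 {X : Type*} [Fintype X] (α : X → ℕ) (R Z : Set (Val X))
    (hR : IsRegion α R) (hZ : IsZone Z)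
    (GR GZ : DGraph X) (hGR : IsCanonGraph GR R) (hGZ : IsCanonGraph GZ Z) :
    R ∩ Z = ∅ ↔ ∃ x y : Vtx X, ((GZ y x).add (GR x y)).le (wlt 0) :=
  stmt1_general α R Z hR GR GZ hGR hGZ

end TAform

end
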